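/- arXiv:1501.07053 — 3 statements merged into one kernel-verified Lean document; each statement's English description precedes it below -/
import Mathlib

section
/- Computing the maximum weight common subsequence of two strings of length n over an alphabet Σ with integer weights w: Σ → {1,...,K} reduces to computing the (unweighted) longest common subsequence of two strings of length at most K·n: namely, if each symbol ℓ in each string is replaced by w(ℓ) consecutive copies of ℓ, then the LCS length of the resulting strings equals the maximum total weight of a common subsequence of the original strings. -/
/-- Length of a longest common subsequence of two lists. -/
noncomputable def lcs {α : Type*} (P₁ P₂ : List α) : ℕ :=
  sSup {n | ∃ z : List α, z.Sublist P₁ ∧ z.Sublist P₂ ∧ z.length = n}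

/-- Maximum total weight of a common subsequence of two lists. -/
noncomputable def wlcs {α : Type*} (w : α → ℕ) (P₁ P₂ : List α) : ℕ :=
  sSup {n | ∃ z : List α, z.Sublist P₁ ∧ z.Sublist P₂ ∧ (z.map w).sum = n}

/-- The blow-up map: each symbol `c` is replaced by `w c` consecutive copies of `c`. -/
def blow {α : Type*} (w : α → ℕ) (s : List α) : List α :=
  (s.map fun c => List.replicate (w c) c).flatten

/-!
Blowing up a common subsequence `z` of `P₁`, `P₂` gives a common subsequence of the blow-ups of
length equal to the weight of `z`. Conversely, a common subsequence `u` of the blow-ups starts with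
a run `aᵏ¹` taken from the first block of `blow w P₁` and a run `bᵏ²` taken from the first block of
`blow w P₂`. If one run is empty, the corresponding leading symbol is dropped; otherwise `a = b`,
the shorter run is absorbed into the longer one, whose length is at most `w a`, and `a` is matched
in both strings. Induction on `|P₁| + |P₂|` then yields a common subsequence of weight `≥ |u|`.
-/

section

open List

variable {α : Type*}

theorem List.sublist_replicate_append_iff {u v : List α} {m : ℕ} {a : α} :
    u <+ replicate m a ++ v ↔ ∃ k ≤ m, ∃ q, u = replicate k a ++ q ∧ q <+ v := by
  simp only [sublist_append_iff, sublist_replicate_iff]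
  constructor
  · rintro ⟨_, q, rfl, ⟨k, hk, rfl⟩, hq⟩
    exact ⟨k, hk, q, rfl, hq⟩
  · rintro ⟨k, hk, q, rfl, hq⟩
    exact ⟨_, q, rfl, ⟨k, hk, rfl⟩, hq⟩

theorem List.eq_of_replicate_append_eq_replicate_append {k₁ k₂ : ℕ} {a b : α} {q₁ q₂ : List α}
    (hk₁ : k₁ ≠ 0) (hk₂ : k₂ ≠ 0) (h : replicate k₁ a ++ q₁ = replicate k₂ b ++ q₂) : a = b := by
  obtain ⟨k₁, rfl⟩ := Nat.exists_eq_succ_of_ne_zero hk₁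
  obtain ⟨k₂, rfl⟩ := Nat.exists_eq_succ_of_ne_zero hk₂
  simpa [replicate_succ] using congrArg head? h

theorem List.exists_sublist_sublist_of_replicate_append_eq {k₁ k₂ : ℕ} {a : α}
    {q₁ q₂ : List α} (h : replicate k₁ a ++ q₁ = replicate k₂ a ++ q₂) :
    ∃ q, q <+ q₁ ∧ q <+ q₂ ∧ (replicate k₁ a ++ q₁).length = max k₁ k₂ + q.length := by
  wlog hle : k₁ ≤ k₂ generalizing k₁ k₂ q₁ q₂
  · obtain ⟨q, hq₂, hq₁, hlen⟩ := this h.symm (by omega)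
    exact ⟨q, hq₁, hq₂, by rw [h, hlen, max_comm]⟩
  have hq₁ : q₁ = replicate (k₂ - k₁) a ++ q₂ := by
    refine append_cancel_left (as := replicate k₁ a) ?_
    rw [← append_assoc, replicate_append_replicate, Nat.add_sub_cancel' hle, h]
  refine ⟨q₂, hq₁ ▸ sublist_append_right _ _, Sublist.refl _, ?_⟩
  rw [h, length_append, length_replicate, max_eq_right hle]

@[simp]
theorem blow_nil (w : α → ℕ) : blow w [] = [] := rfl

@[simp]
theorem blow_cons (w : α → ℕ) (a : α) (s : List α) :
    blow w (a :: s) = replicate (w a) a ++ blow w s := rfl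

@[simp]
theorem length_blow (w : α → ℕ) (s : List α) : (blow w s).length = (s.map w).sum := by
  induction s <;> simp_all

theorem length_blow_le {w : α → ℕ} {K : ℕ} (hK : ∀ c, w c ≤ K) (s : List α) :
    (blow w s).length ≤ K * s.length := by
  rw [length_blow, mul_comm, ← length_map w, ← smul_eq_mul]
  exact sum_le_card_nsmul _ _ (by simpa using fun c _ ↦ hK c)

theorem List.Sublist.blow (w : α → ℕ) {z s : List α} (h : z <+ s) : blow w z <+ blow w s :=
  (h.map _).flatten

theorem exists_sublist_sublist_length_le_sum_of_sublist_blow (w : α → ℕ) :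
    ∀ {s₁ s₂ u : List α}, u <+ blow w s₁ → u <+ blow w s₂ →
      ∃ z, z <+ s₁ ∧ z <+ s₂ ∧ u.length ≤ (z.map w).sum
  | [], _, _, h₁, _ => ⟨[], nil_sublist _, nil_sublist _, by simp_all⟩
  | _, [], _, _, h₂ => ⟨[], nil_sublist _, nil_sublist _, by simp_all⟩
  | a :: t₁, b :: t₂, u, h₁, h₂ => by
    obtain ⟨k₁, hk₁, q₁, hu₁, hq₁⟩ := sublist_replicate_append_iff.1 (blow_cons w a t₁ ▸ h₁)
    obtain ⟨k₂, hk₂, q₂, hu₂, hq₂⟩ := sublist_replicate_append_iff.1 (blow_cons w b t₂ ▸ h₂)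
    by_cases h0₁ : k₁ = 0
    · obtain ⟨z, hz₁, hz₂, hz⟩ :=
        exists_sublist_sublist_length_le_sum_of_sublist_blow w (s₁ := t₁) (by simp_all) h₂
      exact ⟨z, hz₁.cons a, hz₂, hz⟩
    by_cases h0₂ : k₂ = 0
    · obtain ⟨z, hz₁, hz₂, hz⟩ :=
        exists_sublist_sublist_length_le_sum_of_sublist_blow w h₁ (s₂ := t₂) (by simp_all)
      exact ⟨z, hz₁, hz₂.cons b, hz⟩
    have hu := hu₁.symm.trans hu₂
    obtain rfl := eq_of_replicate_append_eq_replicate_append h0₁ h0₂ hu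
    obtain ⟨q, hq₁', hq₂', hlen⟩ := exists_sublist_sublist_of_replicate_append_eq hu
    obtain ⟨z, hz₁, hz₂, hz⟩ :=
      exists_sublist_sublist_length_le_sum_of_sublist_blow w (hq₁'.trans hq₁) (hq₂'.trans hq₂)
    refine ⟨a :: z, hz₁.cons_cons a, hz₂.cons_cons a, ?_⟩
    rw [hu₁, hlen, map_cons, sum_cons]
    omega
termination_by s₁ s₂ => s₁.length + s₂.length

theorem lcs_blow_eq_wlcs (w : α → ℕ) (P₁ P₂ : List α) :
    lcs (blow w P₁) (blow w P₂) = wlcs w P₁ P₂ := by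
  refine csSup_eq_csSup_of_forall_exists_le ?_ ?_
  · rintro _ ⟨u, h₁, h₂, rfl⟩
    obtain ⟨z, hz₁, hz₂, hz⟩ := exists_sublist_sublist_length_le_sum_of_sublist_blow w h₁ h₂
    exact ⟨_, ⟨z, hz₁, hz₂, rfl⟩, hz⟩
  · rintro _ ⟨z, h₁, h₂, rfl⟩
    exact ⟨_, ⟨blow w z, h₁.blow w, h₂.blow w, rfl⟩, (length_blow w z).ge⟩

end

/-- computing a maximum-weight common subsequence (weights in
`{1,…,K}`) reduces to the unweighted LCS of the blown-up strings, which have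
length at most `K·n`: the LCS of the blow-ups equals the WLCS of the originals. -/
theorem wlcs_eq_lcs_blow {α : Type*} (K : ℕ) (w : α → ℕ)
    (hw : ∀ c : α, 1 ≤ w c ∧ w c ≤ K) (P₁ P₂ : List α) :
    (blow w P₁).length ≤ K * P₁.length ∧
    (blow w P₂).length ≤ K * P₂.length ∧
    lcs (blow w P₁) (blow w P₂) = wlcs w P₁ P₂ :=
  have hK : ∀ c, w c ≤ K := fun c ↦ (hw c).2
  ⟨length_blow_le hK P₁, length_blow_le hK P₂, lcs_blow_eq_wlcs w P₁ P₂⟩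
end

section
/- For DTWD over symbols (distance 1 between distinct symbols, 0 between equal symbols): for any sequences x, y, DTWD(x,y) = 0 if and only if the sequences obtained from x and y by collapsing each maximal run of equal consecutive symbols to a single symbol are identical. -/
/-- Dynamic time warping distance over symbols: the point distance is `1`
between distinct symbols and `0` between equal symbols; empty-vs-nonempty is
`⊤` (no traversal exists). -/
noncomputable def dtwdSym {α : Type*} [DecidableEq α] : List α → List α → ℕ∞
  | [], [] => 0
  | [], _ :: _ => ⊤
  | _ :: _, [] => ⊤
  | [x], [y] => if x = y then 0 else 1
  | [x], y :: y' :: ys => (if x = y then 0 else 1) + dtwdSym [x] (y' :: ys)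
  | x :: x' :: xs, [y] => (if x = y then 0 else 1) + dtwdSym (x' :: xs) [y]
  | x :: x' :: xs, y :: y' :: ys =>
      (if x = y then 0 else 1) + min (dtwdSym (x' :: xs) (y :: y' :: ys))
        (min (dtwdSym (x :: x' :: xs) (y' :: ys)) (dtwdSym (x' :: xs) (y' :: ys)))
  termination_by x y => x.length + y.length


namespace List

variable {α : Type*} (R : α → α → Prop) [DecidableRel R]

theorem head?_destutter' (a : α) (l : List α) : (l.destutter' R a).head? = some a := by
  induction l generalizing a with
  | nil => rfl
  | cons b l ih =>
    rw [destutter'_cons]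
    split
    · rfl
    · exact ih a

theorem head?_destutter (l : List α) : (l.destutter R).head? = l.head? := by
  cases l with
  | nil => rfl
  | cons a l => exact head?_destutter' R a l

variable {R} in
theorem head?_eq_of_destutter_eq {l m : List α} (h : l.destutter R = m.destutter R) :
    l.head? = m.head? := by
  rw [← head?_destutter R l, h, head?_destutter]

variable [DecidableEq α]

theorem destutter_ne_cons (a : α) (l : List α) :
    (a :: l).destutter (· ≠ ·) =
      if l.head? = some a then l.destutter (· ≠ ·) else a :: l.destutter (· ≠ ·) := by
  cases l with
  | nil => rfl
  | cons b l =>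
    by_cases hab : a = b
    · subst hab
      simp [destutter_cons']
    · simp [destutter_cons', hab, Ne.symm hab]

theorem destutter_ne_cons_eq_cons_iff (a b : α) (l m : List α) :
    (a :: l).destutter (· ≠ ·) = (b :: m).destutter (· ≠ ·) ↔
      a = b ∧ (l.destutter (· ≠ ·) = (b :: m).destutter (· ≠ ·) ∨
        (a :: l).destutter (· ≠ ·) = m.destutter (· ≠ ·) ∨
        l.destutter (· ≠ ·) = m.destutter (· ≠ ·)) := by
  constructor
  · intro h
    obtain rfl : a = b := by simpa using head?_eq_of_destutter_eq h
    refine ⟨rfl, ?_⟩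
    by_cases hl : l.head? = some a
    · rw [destutter_ne_cons a l, if_pos hl] at h
      exact .inl h
    by_cases hm : m.head? = some a
    · rw [destutter_ne_cons a m, if_pos hm] at h
      exact .inr (.inl h)
    · rw [destutter_ne_cons, destutter_ne_cons, if_neg hl, if_neg hm, cons_inj_right] at h
      exact .inr (.inr h)
  · rintro ⟨rfl, h | h | h⟩
    · rw [destutter_ne_cons a l, if_pos (by simpa using head?_eq_of_destutter_eq h), h]
    · rw [destutter_ne_cons a m, if_pos (by simpa using (head?_eq_of_destutter_eq h).symm), h]
    · rw [destutter_ne_cons, destutter_ne_cons, head?_eq_of_destutter_eq h, h]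

end List

theorem dtwdSym_cons_cons {α : Type*} [DecidableEq α] (a b : α) (l m : List α) :
    dtwdSym (a :: l) (b :: m) = (if a = b then 0 else 1) +
      min (dtwdSym l (b :: m)) (min (dtwdSym (a :: l) m) (dtwdSym l m)) := by
  rcases l with _ | ⟨a', l⟩ <;> rcases m with _ | ⟨b', m⟩ <;> simp [dtwdSym]

/-- for DTWD over symbols, `DTWD(x,y) = 0` iff the sequences
obtained from `x` and `y` by collapsing each maximal run of equal consecutive
symbols to a single symbol are identical. -/
theorem dtwd_eq_zero_iff_destutter {α : Type*} [DecidableEq α] (x y : List α) :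
    dtwdSym x y = 0 ↔ x.destutter (· ≠ ·) = y.destutter (· ≠ ·) := by
  match x, y with
  | [], [] => simp [dtwdSym]
  | [], b :: m => simp [dtwdSym, eq_comm (a := [])]
  | a :: l, [] => simp [dtwdSym]
  | a :: l, b :: m =>
    rw [dtwdSym_cons_cons, add_eq_zero, min_eq_zero, min_eq_zero,
      dtwd_eq_zero_iff_destutter l (b :: m), dtwd_eq_zero_iff_destutter (a :: l) m,
      dtwd_eq_zero_iff_destutter l m, List.destutter_ne_cons_eq_cons_iff, ite_eq_left_iff]
    simp
termination_by x.length + y.length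
end

section
/- Lower bound step for the k-string selection gadget: with strings P_1,...,P_k as constructed (each P_i containing around n aligned vector-gadget intervals plus padding symbols 3_2,...,3_k of weights B_2 > ... > B_k, and interval scores E_U for close tuples, E_U + 1 for a far tuple), if there exist indices t_1,...,t_k such that the vector tuple (α^1_{t_1},...,α^k_{t_k}) is r-far, then the k strings admit a common-subsequence matching of total weight at least E_G + 1, where E_G = n·E_U + B_2 + (2n+1)·Σ_{i=2}^{k} B_i. -/
/-!
Fix a far tuple `t` and cut out of each `P_i` a window of `n` consecutive vector gadgets, starting
at gadget `(i - 1) n + t_i - t_1`, so that slot `t_1` of the windows holds the far tuple and every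
other slot a tuple of real or filler gadgets. Aligning the windows slot by slot, with `0 ⋯ 2` around
each vector-gadget alignment, gives `n E_U + 1`. Before the windows the padding symbols are matched
in decreasing order `3_k, …, 3_2`, after them in increasing order `3_2, …, 3_k`: in `P_i` the
symbols `3_j` with `j > i` come from the blocks `(3_{i+1} ⋯ 3_k)^Q`, the others from the tails
`3_2 ⋯ 3_i` of the gadgets outside the window, one strictly increasing run per tail. The numbers of
copies are chosen so that `3_2` is matched `2n + 2` times and every other `3_j` exactly `2n + 1`
times, and on each side of the window they need exactly the tails that are there.

A matching of weight `W` is the same as a common subsequence of weight `W`, so the construction is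
carried out with `List.Sublist`.
-/

/-- A (common-subsequence) matching of the `k` strings `T`: a list of position
tuples, strictly increasing coordinatewise, each tuple pointing at equal
symbols in all `k` strings. -/
def IsMatching {α : Type*} {k : ℕ} (T : Fin k → List α) (M : List (Fin k → ℕ)) : Prop :=
  M.Chain' (fun a b => ∀ i, a i < b i) ∧
    ∀ tup ∈ M, ∃ s : α, ∀ i, (T i)[tup i]? = some s

/-- Weight of a matching, read off in coordinate `i`. -/
def matchWeight {α : Type*} [Inhabited α] {k : ℕ} (w : α → ℕ) (T : Fin k → List α)
    (i : Fin k) (M : List (Fin k → ℕ)) : ℕ :=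
  (M.map fun tup => w ((T i).getD (tup i) default)).sum

/-- The block of padding symbols `3_a 3_{a+1} ⋯ 3_b`. -/
def padBlock {α : Type*} (pad : ℕ → α) (a b : ℕ) : List α :=
  (List.range' a (b + 1 - a)).map pad

/-- `m` concatenated copies of the list `l`. -/
def rep {α : Type*} (m : ℕ) (l : List α) : List α :=
  (List.replicate m l).flatten

/-- The decorated vector-gadget interval `VG'_i(v)`:
`0 ∘ v ∘ 2` for `i = 1` and `0 ∘ v ∘ 2 ∘ (3_2 ⋯ 3_i)` for `i ≥ 2`. -/
def decorate {α : Type*} (c0 c2 : α) (pad : ℕ → α) (ii : ℕ) (v : List α) : List α :=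
  c0 :: v ++ c2 :: padBlock pad 2 ii

/-- The selection-gadget string `P_i` (with paper index `ii = i + 1 ∈ {1,…,k}`):
`(3_{i+1}⋯3_k)^Q (3_2⋯3_i) (VG'_i(f))^{(i−1)n} (VG'_i(α^i_1) ⋯ VG'_i(α^i_n))
(VG'_i(f))^{(i−1)n} (3_{i+1}⋯3_k)^Q`. -/
def selString {α : Type*} (k n : ℕ) (c0 c2 : α) (pad : ℕ → α)
    (VG : ℕ → Fin n → List α) (VGf : ℕ → List α) (Q : ℕ) (ii : ℕ) : List α :=
  rep Q (padBlock pad (ii + 1) k) ++ padBlock pad 2 ii ++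
    rep ((ii - 1) * n) (decorate c0 c2 pad ii (VGf ii)) ++
    ((List.finRange n).map fun t => decorate c0 c2 pad ii (VG ii t)).flatten ++
    rep ((ii - 1) * n) (decorate c0 c2 pad ii (VGf ii)) ++
    rep Q (padBlock pad (ii + 1) k)

open scoped List

section Matching

variable {α : Type*} {k : ℕ} {T : Fin k → List α} {M : List (Fin k → ℕ)}

theorem IsMatching.map_getD_sublist (hM : IsMatching T M) (i : Fin k) (d : α) :
    M.map (fun tup => (T i).getD (tup i) d) <+ T i := by
  have hlt : ∀ p ∈ M.map (· i), p < (T i).length := by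
    simp only [List.mem_map]
    rintro _ ⟨tup, htup, rfl⟩
    obtain ⟨s, hs⟩ := hM.2 tup htup
    exact (List.getElem?_eq_some_iff.1 (hs i)).1
  have hsorted : (M.map (· i)).Pairwise (· < ·) :=
    (List.isChain_map_of_isChain _ (fun _ _ h => h i) hM.1).pairwise
  convert List.map_getElem_sublist (l := T i)
    (hsorted.pmap hlt (f := fun p h => (⟨p, h⟩ : Fin (T i).length)) fun _ _ _ _ h => h) using 1
  rw [List.map_pmap, List.pmap_eq_map_attach]
  refine List.ext_getElem (by simp) fun r h _ => ?_
  have hr : (M[r]'(by simpa using h)) i < (T i).length :=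
    hlt _ (List.mem_map_of_mem (List.getElem_mem _))
  simp [List.getElem?_eq_getElem hr]

theorem IsMatching.exists_sublist [Inhabited α] (w : α → ℕ) (hM : IsMatching T M)
    (i₀ : Fin k) :
    ∃ S : List α, (∀ i, S <+ T i) ∧ (S.map w).sum = matchWeight w T i₀ M := by
  refine ⟨M.map fun tup => (T i₀).getD (tup i₀) default, fun i => ?_,
    by simp [matchWeight, Function.comp_def]⟩
  convert hM.map_getD_sublist i default using 1
  refine List.map_congr_left fun tup htup => ?_
  obtain ⟨s, hs⟩ := hM.2 tup htup
  simp [List.getD_eq_getElem?_getD, hs]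

theorem exists_isMatching_of_sublist [Inhabited α] (w : α → ℕ) {S : List α}
    (hS : ∀ i, S <+ T i) (i₀ : Fin k) :
    ∃ M, IsMatching T M ∧ matchWeight w T i₀ M = (S.map w).sum := by
  choose f hf using fun i => List.sublist_iff_exists_fin_orderEmbedding_get_eq.1 (hS i)
  refine ⟨(List.finRange S.length).map fun r i => f i r, ⟨?_, ?_⟩, ?_⟩
  · exact ((List.pairwise_lt_finRange _).map _ fun a b h i => (f i).lt_iff_lt.2 h).isChain
  · simp only [List.mem_map]
    rintro _ ⟨r, -, rfl⟩
    exact ⟨S.get r, fun i => by simpa using (hf i r).symm⟩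
  · simp only [matchWeight, List.map_map]
    conv_rhs => rw [← List.ofFn_get S, List.ofFn_eq_map, List.map_map]
    congr 1
    refine List.map_congr_left fun r _ => ?_
    simpa using congrArg w (hf i₀ r).symm

end Matching

section Repetition

variable {β γ : Type*}

theorem rep_succ (m : ℕ) (l : List β) : rep (m + 1) l = l ++ rep m l := by
  simp [rep, List.replicate_succ]

theorem rep_map (f : β → γ) (m : ℕ) (l : List β) : rep m (l.map f) = (rep m l).map f := by
  simp [rep, List.map_flatten, List.map_replicate]

theorem rep_sublist_rep {m m' : ℕ} (h : m ≤ m') (l : List β) : rep m l <+ rep m' l := by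
  obtain ⟨d, rfl⟩ := Nat.exists_eq_add_of_le h
  rw [rep, rep, List.replicate_add, List.flatten_append]
  exact List.sublist_append_left _ _

theorem rep_length_sublist_flatten (L : List (List β)) (B : List β) :
    rep L.length B <+ (L.map (· ++ B)).flatten := by
  induction L with
  | nil => simp [rep]
  | cons x L ih =>
    rw [List.length_cons, rep_succ, List.map_cons, List.flatten_cons]
    exact ((List.sublist_append_right x B).append ih)

theorem flatten_append_sublist_flatten_map_append {As Bs : List (List β)}
    (h : List.Forall₂ (· <+ ·) As Bs) (hne : Bs ≠ []) (B : List β) :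
    As.flatten ++ B <+ (Bs.map (· ++ B)).flatten := by
  induction h with
  | nil => exact absurd rfl hne
  | @cons a b As Bs hab _ ih =>
    by_cases hBs : Bs = []
    · subst hBs
      cases ‹List.Forall₂ _ As []›
      simpa using hab.append_right B
    · simpa [List.append_assoc] using (hab.trans (List.sublist_append_left b B)).append (ih hBs)

theorem rep_append_window_sublist {Bs : List (List β)} {s n : ℕ} (hn : 0 < n)
    (hs : s + n ≤ Bs.length) (A : Fin n → List β)
    (hA : ∀ u : Fin n, A u <+ Bs[s + u]'(by have := u.2; omega)) (B : List β) :
    rep (s + 1) B ++ ((List.finRange n).map A).flatten ++ rep (Bs.length - (s + n) + 1) B <+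
      B ++ (Bs.map (· ++ B)).flatten := by
  have hsplit : Bs = Bs.take s ++ ((Bs.drop s).take n ++ Bs.drop (s + n)) := by
    rw [← List.drop_drop, List.take_append_drop, List.take_append_drop]
  have hwindow : List.Forall₂ (· <+ ·) ((List.finRange n).map A) ((Bs.drop s).take n) := by
    refine List.forall₂_iff_get.2 ⟨by simp; omega, fun u h₁ h₂ => ?_⟩
    simpa using hA ⟨u, by simpa using h₁⟩
  have hne : (Bs.drop s).take n ≠ [] := by
    simp only [ne_eq, List.take_eq_nil_iff, List.drop_eq_nil_iff]; omega
  have hpre := rep_length_sublist_flatten (Bs.take s) B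
  have hpost := rep_length_sublist_flatten (Bs.drop (s + n)) B
  rw [List.length_take_of_le (by omega)] at hpre
  rw [List.length_drop] at hpost
  conv_rhs => rw [hsplit]
  rw [rep_succ, rep_succ]
  simpa only [List.map_append, List.flatten_append, List.append_assoc] using
    ((List.Sublist.refl B).append hpre).append
      ((flatten_append_sublist_flatten_map_append hwindow hne B).append hpost)

end Repetition

section AscendingRuns

/-- The number of maximal strictly increasing runs of a list. -/
def ascRuns : List ℕ → ℕ
  | [] => 0
  | [_] => 1
  | x :: y :: l => ascRuns (y :: l) + if x < y then 0 else 1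

theorem ascRuns_le_length : ∀ l : List ℕ, ascRuns l ≤ l.length
  | [] => le_rfl
  | [_] => le_rfl
  | x :: y :: l => by
    have := ascRuns_le_length (y :: l)
    simp only [ascRuns, List.length_cons] at *
    split <;> omega

theorem one_le_ascRuns_cons : ∀ (x : ℕ) (L : List ℕ), 1 ≤ ascRuns (x :: L)
  | _, [] => le_rfl
  | _, y :: L => (one_le_ascRuns_cons y L).trans (Nat.le_add_right _ _)

theorem Ico_sublist_Ico_left {a b c : ℕ} (h : a ≤ b) : List.Ico b c <+ List.Ico a c := by
  rcases le_total b c with hbc | hcb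
  · rw [← List.Ico.append_consecutive h hbc]
    exact List.sublist_append_right _ _
  · rw [List.Ico.eq_nil_of_le hcb]
    exact List.nil_sublist _

-- Each strictly increasing run fits into one copy of `Ico lo hi`, the first run already into the
-- part of it from its first element on.
theorem cons_sublist_Ico_append_rep {lo hi : ℕ} :
    ∀ (x : ℕ) (L : List ℕ), (∀ y ∈ x :: L, lo ≤ y ∧ y < hi) →
      x :: L <+ List.Ico x hi ++ rep (ascRuns (x :: L) - 1) (List.Ico lo hi)
  | x, [], h => by
    have hx := h x (by simp)
    simp [ascRuns, rep, List.Ico.eq_cons hx.2]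
  | x, y :: L, h => by
    have hx := h x (by simp)
    have hy := h y (by simp)
    have ih := cons_sublist_Ico_append_rep y L fun z hz => h z (List.mem_cons_of_mem _ hz)
    have hpos := one_le_ascRuns_cons y L
    rw [List.Ico.eq_cons hx.2]
    by_cases hxy : x < y
    · simp only [ascRuns, if_pos hxy, Nat.add_zero]
      exact (ih.trans ((Ico_sublist_Ico_left hxy).append_right _)).cons_cons x
    · simp only [ascRuns, if_neg hxy]
      rw [Nat.add_sub_cancel, show ascRuns (y :: L) = ascRuns (y :: L) - 1 + 1 by omega, rep_succ]
      refine (List.singleton_sublist.2 List.mem_cons_self).append ?_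
      exact ih.trans ((Ico_sublist_Ico_left hy.1).append_right _)

theorem sublist_rep_Ico {lo hi : ℕ} (L : List ℕ) (h : ∀ y ∈ L, lo ≤ y ∧ y < hi) :
    L <+ rep (ascRuns L) (List.Ico lo hi) := by
  cases L with
  | nil => exact List.nil_sublist _
  | cons x L =>
    have hpos := one_le_ascRuns_cons x L
    rw [show ascRuns (x :: L) = ascRuns (x :: L) - 1 + 1 by omega, rep_succ]
    exact (cons_sublist_Ico_append_rep x L h).trans
      ((Ico_sublist_Ico_left (h x List.mem_cons_self).1).append_right _)

theorem ascRuns_replicate (x : ℕ) : ∀ c, ascRuns (List.replicate c x) = c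
  | 0 => rfl
  | 1 => rfl
  | c + 2 => by
    have ih := ascRuns_replicate x (c + 1)
    simp only [List.replicate_succ] at ih ⊢
    rw [ascRuns, ih]
    simp

theorem ascRuns_replicate_append {x y : ℕ} (hxy : x < y) (l : List ℕ) :
    ∀ c, ascRuns (List.replicate (c + 1) x ++ y :: l) = c + ascRuns (y :: l)
  | 0 => by simp [ascRuns, hxy]
  | c + 1 => by
    have ih := ascRuns_replicate_append hxy l c
    simp only [List.replicate_succ, List.cons_append] at ih ⊢
    rw [ascRuns, ih]
    simp only [lt_irrefl, if_false]
    omega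

end AscendingRuns

section RepeatEach

def repeatEach (c : ℕ → ℕ) (js : List ℕ) : List ℕ :=
  js.flatMap fun j => List.replicate (c j) j

variable (c : ℕ → ℕ)

theorem repeatEach_append (l₁ l₂ : List ℕ) :
    repeatEach c (l₁ ++ l₂) = repeatEach c l₁ ++ repeatEach c l₂ :=
  List.flatMap_append

theorem mem_of_mem_repeatEach {js : List ℕ} {x : ℕ} (h : x ∈ repeatEach c js) : x ∈ js := by
  simp only [repeatEach, List.mem_flatMap, List.mem_replicate] at h
  obtain ⟨j, hj, -, rfl⟩ := h
  exact hj

theorem length_repeatEach (js : List ℕ) : (repeatEach c js).length = (js.map c).sum := by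
  simp [repeatEach, List.length_flatMap]

theorem sum_map_repeatEach (f : ℕ → ℕ) (js : List ℕ) :
    ((repeatEach c js).map f).sum = (js.map fun j => c j * f j).sum := by
  induction js with
  | nil => rfl
  | cons j js ih => simp [repeatEach, ← ih]

theorem ascRuns_repeatEach_add_length_le {js : List ℕ} (hjs : js.Pairwise (· < ·))
    (hc : ∀ j ∈ js, 1 ≤ c j) :
    ascRuns (repeatEach c js) + js.length ≤ (js.map c).sum + 1 := by
  induction js with
  | nil => simp [repeatEach, ascRuns]
  | cons x js ih =>
    obtain ⟨a, ha⟩ : ∃ a, c x = a + 1 := ⟨c x - 1, by have := hc x (by simp); omega⟩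
    cases js with
    | nil => simp [repeatEach, ha, ascRuns_replicate]
    | cons y js =>
      obtain ⟨b, hb⟩ : ∃ b, c y = b + 1 := ⟨c y - 1, by have := hc y (by simp); omega⟩
      have hxy : x < y := List.rel_of_pairwise_cons hjs (by simp)
      have ih := ih hjs.of_cons fun j hj => hc j (List.mem_cons_of_mem _ hj)
      have hstep : repeatEach c (x :: y :: js) =
          List.replicate (a + 1) x ++ y :: (List.replicate b y ++ repeatEach c js) := by
        simp [repeatEach, ha, hb, List.replicate_succ]
      have hy : repeatEach c (y :: js) = y :: (List.replicate b y ++ repeatEach c js) := by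
        simp [repeatEach, hb, List.replicate_succ]
      rw [hstep, ascRuns_replicate_append hxy, ← hy]
      simp only [List.length_cons, List.map_cons, List.sum_cons, ha] at ih ⊢
      omega

theorem repeatEach_sublist_rep {js : List ℕ} {lo hi b Q : ℕ}
    (hjs : ∀ j ∈ js, lo ≤ j ∧ j < hi) (hc : ∀ j ∈ js, c j ≤ b)
    (hQ : js.length * b ≤ Q) :
    repeatEach c js <+ rep Q (List.Ico lo hi) := by
  have hlen : ascRuns (repeatEach c js) ≤ Q := by
    refine (ascRuns_le_length _).trans ?_
    rw [length_repeatEach]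
    refine ((js.map c).sum_le_card_nsmul b ?_).trans (by simpa using hQ)
    simpa using hc
  exact (sublist_rep_Ico _ fun y hy => hjs y (mem_of_mem_repeatEach c hy)).trans
    (rep_sublist_rep hlen _)

end RepeatEach

section Counts

variable (n : ℕ) (τ : ℕ → ℕ)

/- `τ j` is the selected vector index of `P_j`. The symbol `3_j` is matched `preCount n τ j` times
before the windows and `postCount n τ j` times after them, and the window of `P_ii` starts at
gadget `windowStart n τ ii`, so that its slot `τ 1` holds the real gadget `τ ii`. -/
def preCount (j : ℕ) : ℕ := n + τ j - τ (j - 1) + if j = 2 then 1 else 0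

def postCount (j : ℕ) : ℕ := n + 1 + τ (j - 1) - τ j

def windowStart (ii : ℕ) : ℕ := (ii - 1) * n + τ ii - τ 1

variable {n τ} (hτ : ∀ j, τ j < n)
include hτ

theorem preCount_add_postCount (j : ℕ) :
    preCount n τ j + postCount n τ j = 2 * n + 1 + if j = 2 then 1 else 0 := by
  have := hτ j
  have := hτ (j - 1)
  unfold preCount postCount
  split <;> omega

theorem preCount_le (j : ℕ) : preCount n τ j ≤ 2 * n := by
  have := hτ j
  unfold preCount
  split <;> omega

theorem postCount_le (j : ℕ) : postCount n τ j ≤ 2 * n := by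
  have := hτ (j - 1)
  unfold postCount
  omega

theorem one_le_postCount (j : ℕ) : 1 ≤ postCount n τ j := by
  have := hτ j
  unfold postCount
  omega

theorem sum_preCount_Ico (m : ℕ) :
    ((List.Ico 2 (m + 3)).map (preCount n τ)).sum + τ 1 = (m + 1) * n + τ (m + 2) + 1 := by
  induction m with
  | zero =>
    have := hτ 1
    simp [List.Ico.succ_singleton, preCount]
    omega
  | succ m ih =>
    have := hτ (m + 2)
    rw [show m + 1 + 3 = m + 3 + 1 by omega, show m + 1 + 2 = m + 3 by omega,
      List.Ico.succ_top (by omega), List.map_append, List.sum_append]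
    simp only [List.map_cons, List.map_nil, List.sum_cons, List.sum_nil, preCount]
    simp only [show m + 3 - 1 = m + 2 by omega, show m + 3 ≠ 2 by omega, if_false]
    rw [add_mul]
    omega

theorem sum_postCount_Ico (m : ℕ) :
    ((List.Ico 2 (m + 2)).map (postCount n τ)).sum + τ (m + 1) = m * n + m + τ 1 := by
  induction m with
  | zero => simp [List.Ico.self_empty]
  | succ m ih =>
    have := hτ (m + 2)
    rw [show m + 1 + 2 = m + 2 + 1 by omega, show m + 1 + 1 = m + 2 by omega,
      List.Ico.succ_top (by omega), List.map_append, List.sum_append]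
    simp only [List.map_cons, List.map_nil, List.sum_cons, List.sum_nil, postCount,
      show m + 2 - 1 = m + 1 by omega]
    rw [add_mul]
    omega

theorem windowStart_add {ii : ℕ} (h1 : 1 ≤ ii) :
    windowStart n τ ii + τ 1 = (ii - 1) * n + τ ii := by
  unfold windowStart
  rcases Nat.lt_or_ge ii 2 with h | h
  · obtain rfl : ii = 1 := by omega
    simp
  · have := hτ 1
    have : n ≤ (ii - 1) * n := Nat.le_mul_of_pos_left n (by omega)
    omega

theorem repeatEach_preCount_sublist_rep {ii : ℕ} (h1 : 1 ≤ ii) :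
    repeatEach (preCount n τ) (List.Ico 2 (ii + 1)).reverse <+
      rep (windowStart n τ ii + 1) (List.Ico 2 (ii + 1)) := by
  refine (sublist_rep_Ico _ fun y hy =>
    List.Ico.mem.1 (List.mem_reverse.1 (mem_of_mem_repeatEach _ hy))).trans
    (rep_sublist_rep ((ascRuns_le_length _).trans ?_) _)
  rw [length_repeatEach, List.map_reverse, List.sum_reverse]
  obtain rfl | ⟨m, rfl⟩ : ii = 1 ∨ ∃ m, ii = m + 2 := by
    rcases Nat.lt_or_ge ii 2 with h | h
    · exact Or.inl (by omega)
    · exact Or.inr ⟨ii - 2, by omega⟩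
  · simp [List.Ico.self_empty]
  · have := sum_preCount_Ico hτ m
    have := windowStart_add hτ h1
    simp only [show m + 2 + 1 = m + 3 by omega, show m + 2 - 1 = m + 1 by omega] at *
    omega

end Counts

section SelectionGadget

variable {α : Type*} {n : ℕ} (c0 c2 : α) (pad : ℕ → α)
  (VG : ℕ → Fin n → List α) (VGf : ℕ → List α)

def gadgets (ii : ℕ) : List (List α) :=
  List.replicate ((ii - 1) * n) (VGf ii) ++ (List.finRange n).map (VG ii) ++
    List.replicate ((ii - 1) * n) (VGf ii)

theorem selString_eq {k : ℕ} (Q ii : ℕ) :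
    selString k n c0 c2 pad VG VGf Q ii =
      (rep Q (List.Ico (ii + 1) (k + 1))).map pad ++
        ((List.Ico 2 (ii + 1)).map pad ++
          ((gadgets VG VGf ii).map fun v =>
            c0 :: v ++ [c2] ++ (List.Ico 2 (ii + 1)).map pad).flatten) ++
        (rep Q (List.Ico (ii + 1) (k + 1))).map pad := by
  simp [selString, gadgets, decorate, padBlock, List.Ico, rep, List.map_replicate,
    List.flatten_append, Function.comp_def]

theorem length_gadgets (ii : ℕ) : (gadgets VG VGf ii).length = 2 * ((ii - 1) * n) + n := by
  simp [gadgets]; ring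

theorem mem_gadgets {ii : ℕ} {g : List α} (hg : g ∈ gadgets VG VGf ii) :
    g = VGf ii ∨ ∃ t, g = VG ii t := by
  simp only [gadgets, List.mem_append, List.mem_replicate, List.mem_map] at hg
  rcases hg with (⟨-, rfl⟩ | ⟨t, -, rfl⟩) | ⟨-, rfl⟩
  exacts [Or.inl rfl, Or.inr ⟨t, rfl⟩, Or.inl rfl]

theorem getD_gadgets_real (ii : ℕ) (t : Fin n) :
    (gadgets VG VGf ii).getD ((ii - 1) * n + t) [] = VG ii t := by
  rw [gadgets, List.append_assoc, List.getD_append_right _ _ _ _ (by simp)]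
  simp [List.getD_eq_getElem?_getD, List.getElem?_append_left]

theorem mul_two_mul_le_length_selString {k : ℕ} :
    (k - 1) * (2 * n) ≤ (selString k n c0 c2 pad VG VGf 0 k).length := by
  have hdec := List.card_nsmul_le_sum
    ((gadgets VG VGf k).map fun v => (c0 :: v ++ [c2] ++ (List.Ico 2 (k + 1)).map pad).length) 1
    fun x hx => by
      obtain ⟨v, -, rfl⟩ := List.mem_map.1 hx
      simp
  simp only [selString_eq, List.length_append, List.length_flatten, List.length_map, List.map_map,
    Function.comp_def, length_gadgets, smul_eq_mul, mul_one] at hdec ⊢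
  rw [show (k - 1) * (2 * n) = 2 * ((k - 1) * n) by ring]
  omega

def alignedSeq (k : ℕ) (τ : ℕ → ℕ) (S : Fin n → List α) : List α :=
  (repeatEach (preCount n τ) (List.Ico 2 (k + 1)).reverse).map pad ++
    ((List.finRange n).map fun u => c0 :: S u ++ [c2]).flatten ++
    (repeatEach (postCount n τ) (List.Ico 2 (k + 1))).map pad

variable {τ : ℕ → ℕ} (hτ : ∀ j, τ j < n)
include hτ

theorem windowStart_add_le_length_gadgets {ii : ℕ} (h1 : 1 ≤ ii) :
    windowStart n τ ii + n ≤ (gadgets VG VGf ii).length := by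
  have := windowStart_add hτ h1
  rw [length_gadgets]
  rcases Nat.lt_or_ge ii 2 with h | h
  · obtain rfl : ii = 1 := by omega
    omega
  · have := hτ ii
    have : n ≤ (ii - 1) * n := Nat.le_mul_of_pos_left n (by omega)
    omega

theorem repeatEach_postCount_sublist_rep {ii : ℕ} (h1 : 1 ≤ ii) :
    repeatEach (postCount n τ) (List.Ico 2 (ii + 1)) <+
      rep ((gadgets VG VGf ii).length - (windowStart n τ ii + n) + 1) (List.Ico 2 (ii + 1)) := by
  refine (sublist_rep_Ico _ fun y hy => List.Ico.mem.1 (mem_of_mem_repeatEach _ hy)).trans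
    (rep_sublist_rep ?_ _)
  have h := ascRuns_repeatEach_add_length_le (postCount n τ) (List.Ico.pairwise_lt 2 (ii + 1))
    fun j _ => one_le_postCount hτ j
  have hsum := sum_postCount_Ico hτ (ii - 1)
  have hw := windowStart_add hτ h1
  rw [List.Ico.length] at h
  rw [show ii - 1 + 2 = ii + 1 by omega, show ii - 1 + 1 = ii by omega] at hsum
  rw [length_gadgets]
  omega

theorem alignedSeq_sublist_selString (hn : 0 < n) {k Q ii : ℕ} (h1 : 1 ≤ ii) (hk : ii ≤ k)
    (hQ : (k - 1) * (2 * n) ≤ Q) (S : Fin n → List α)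
    (hS : ∀ u : Fin n, S u <+ (gadgets VG VGf ii).getD (windowStart n τ ii + u) []) :
    alignedSeq c0 c2 pad k τ S <+ selString k n c0 c2 pad VG VGf Q ii := by
  have hwin := windowStart_add_le_length_gadgets VG VGf hτ h1
  have hlen_hi : (List.Ico (ii + 1) (k + 1)).length * (2 * n) ≤ Q := by
    rw [List.Ico.length]
    exact (Nat.mul_le_mul_right _ (by omega)).trans hQ
  have hpre_hi := repeatEach_sublist_rep (preCount n τ) (js := (List.Ico (ii + 1) (k + 1)).reverse)
    (lo := ii + 1) (hi := k + 1) (by simp [List.Ico.mem]) (fun j _ => preCount_le hτ j)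
    (by simpa using hlen_hi)
  have hpost_hi := repeatEach_sublist_rep (postCount n τ) (fun j hj => List.Ico.mem.1 hj)
    (fun j _ => postCount_le hτ j) hlen_hi
  have hpre_lo := repeatEach_preCount_sublist_rep hτ h1
  have hpost_lo := repeatEach_postCount_sublist_rep VG VGf hτ h1
  have hwindow := rep_append_window_sublist
    (Bs := (gadgets VG VGf ii).map fun v => c0 :: v ++ [c2]) hn (by simpa using hwin)
    (fun u => c0 :: S u ++ [c2])
    (fun u => by
      have := (hS u).append_right [c2] |>.cons_cons c0
      rw [List.getD_eq_getElem _ _ (by have := u.2; omega)] at this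
      simpa using this) ((List.Ico 2 (ii + 1)).map pad)
  rw [selString_eq, alignedSeq, ← List.Ico.append_consecutive (by omega : 2 ≤ ii + 1)
    (by omega : ii + 1 ≤ k + 1)]
  simp only [List.reverse_append, repeatEach_append, List.map_append, List.length_map,
    List.map_map, Function.comp_def, rep_map] at hwindow ⊢
  simpa only [List.append_assoc] using (hpre_hi.map pad).append
    ((((hpre_lo.map pad).append (List.Sublist.refl _)).append (hpost_lo.map pad)).trans hwindow
      |>.append (hpost_hi.map pad))

theorem le_sum_map_alignedSeq {k : ℕ} (hk : 2 ≤ k) (w : α → ℕ) {C E_n : ℕ}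
    {Bw : ℕ → ℕ}
    (hw0 : w c0 = C) (hw2 : w c2 = C) (hwpad : ∀ j ∈ Finset.Icc 2 k, w (pad j) = Bw j)
    (S : Fin n → List α) (u₀ : Fin n)
    (hS : ∀ u, E_n + (if u = u₀ then 1 else 0) ≤ ((S u).map w).sum) :
    n * (2 * C + E_n) + Bw 2 + (2 * n + 1) * (∑ j ∈ Finset.Icc 2 k, Bw j) + 1 ≤
      ((alignedSeq c0 c2 pad k τ S).map w).sum := by
  have hpads : ((List.Ico 2 (k + 1)).map fun j => preCount n τ j * w (pad j)).sum +
      ((List.Ico 2 (k + 1)).map fun j => postCount n τ j * w (pad j)).sum =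
        Bw 2 + (2 * n + 1) * ∑ j ∈ Finset.Icc 2 k, Bw j := by
    rw [← List.sum_map_add]
    change ∑ j ∈ Finset.Icc 2 k, _ = _
    rw [Finset.sum_congr rfl fun j hj => by
      rw [← add_mul, preCount_add_postCount hτ, hwpad j hj]]
    simp [add_mul, Finset.sum_add_distrib, Finset.mul_sum, Finset.sum_ite_eq', hk, add_comm]
  have hwindow : n * (2 * C + E_n) + 1 ≤
      ((((List.finRange n).map fun u => c0 :: S u ++ [c2]).flatten).map w).sum := by
    rw [List.map_flatten, List.sum_flatten, List.map_map, List.map_map, ← Fin.sum_univ_def]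
    calc n * (2 * C + E_n) + 1 = ∑ u : Fin n, (C + (E_n + if u = u₀ then 1 else 0) + C) := by
          simp [Finset.sum_add_distrib, Finset.sum_ite_eq']; ring
      _ ≤ _ := Finset.sum_le_sum fun u _ => by
          have := hS u
          simp only [Function.comp_apply, List.map_cons, List.map_append, List.sum_cons,
            List.sum_append, hw0, hw2]
          simp
          omega
  simp only [alignedSeq, List.map_append, List.sum_append, List.map_map, sum_map_repeatEach,
    List.map_reverse, List.sum_reverse, Function.comp_apply]
  omega

def slotTuple (k : ℕ) (τ : ℕ → ℕ) (u : ℕ) (i : Fin k) : List α :=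
  (gadgets VG VGf (i + 1)).getD (windowStart n τ (i + 1) + u) []

theorem slotTuple_cases {k : ℕ} (u : Fin n) (i : Fin k) :
    slotTuple VG VGf k τ u i = VGf (i + 1) ∨
      ∃ t, slotTuple VG VGf k τ u i = VG (i + 1) t := by
  have := windowStart_add_le_length_gadgets VG VGf hτ (ii := i + 1) (by omega)
  rw [slotTuple, List.getD_eq_getElem _ _ (by omega)]
  exact mem_gadgets VG VGf (List.getElem_mem _)

theorem slotTuple_selected {k : ℕ} {t : Fin k → Fin n}
    (hτt : ∀ i : Fin k, τ (i + 1) = t i) :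
    slotTuple VG VGf k τ (τ 1) = fun i : Fin k => VG ((i : ℕ) + 1) (t i) := by
  funext i
  rw [slotTuple, windowStart_add hτ (by omega), hτt]
  exact getD_gadgets_real VG VGf (i + 1) (t i)

end SelectionGadget

/-- lower-bound step for the `k`-string selection gadget.  If the
vector gadgets admit matchings of weight `E_n` for every (close or far) tuple
and of weight `E_n + 1` for some far tuple, then the full strings
`P_1, …, P_k` admit a matching of total weight at least `E_G + 1`, where
`E_U = 2C + E_n` and `E_G = n·E_U + B_2 + (2n+1)·Σ_{j=2}^{k} B_j`. -/
theorem selection_gadget_lower_bound {α : Type*} [Inhabited α] {k n : ℕ}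
    (hk : 2 ≤ k) (hn : 1 ≤ n) (w : α → ℕ) (c0 c2 : α) (pad : ℕ → α)
    (C E_n : ℕ) (Bw : ℕ → ℕ)
    (hw0 : w c0 = C) (hw2 : w c2 = C)
    (hwpad : ∀ j ∈ Finset.Icc 2 k, w (pad j) = Bw j)
    (VG : ℕ → Fin n → List α) (VGf : ℕ → List α)
    (far : (Fin k → Fin n) → Prop)
    -- any tuple consisting of a (real or filler) vector gadget from each string
    -- admits a matching of weight at least `E_n`
    (hclose : ∀ g : Fin k → List α,
      (∀ i : Fin k, g i = VGf ((i : ℕ) + 1) ∨ ∃ t : Fin n, g i = VG ((i : ℕ) + 1) t) →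
      ∃ M', IsMatching g M' ∧ E_n ≤ matchWeight w g (⟨0, by omega⟩ : Fin k) M')
    -- a far tuple of vector gadgets admits a matching of weight at least `E_n + 1`
    (hfar : ∀ t : Fin k → Fin n, far t →
      ∃ M', IsMatching (fun i => VG ((i : ℕ) + 1) (t i)) M' ∧
        E_n + 1 ≤ matchWeight w (fun i => VG ((i : ℕ) + 1) (t i)) (⟨0, by omega⟩ : Fin k) M')
    (Q : ℕ)
    (hQ : Q = (selString k n c0 c2 pad VG VGf 0 k).length)
    (P : Fin k → List α)
    (hP : ∀ i : Fin k, P i = selString k n c0 c2 pad VG VGf Q ((i : ℕ) + 1))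
    (hexists : ∃ t : Fin k → Fin n, far t) :
    ∃ M : List (Fin k → ℕ), IsMatching P M ∧
      n * (2 * C + E_n) + Bw 2 + (2 * n + 1) * (∑ j ∈ Finset.Icc 2 k, Bw j) + 1 ≤
        matchWeight w P (⟨0, by omega⟩ : Fin k) M := by
  obtain ⟨t, ht⟩ := hexists
  obtain ⟨τ, hτ, hτt⟩ :
      ∃ τ : ℕ → ℕ, (∀ j, τ j < n) ∧ ∀ i : Fin k, τ (i + 1) = t i :=
    ⟨fun j => if h : j - 1 < k then t ⟨j - 1, h⟩ else 0,
      fun j => by dsimp only; split <;> omega, fun i => by simp⟩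
  have hslot : ∀ u : Fin n, ∃ Su : List α, (∀ i, Su <+ slotTuple VG VGf k τ u i) ∧
      E_n + (if u = ⟨τ 1, hτ 1⟩ then 1 else 0) ≤ (Su.map w).sum := by
    intro u
    by_cases hu : u = ⟨τ 1, hτ 1⟩
    · obtain ⟨M', hM', hwM'⟩ := hfar t ht
      obtain ⟨Su, hsub, hsum⟩ := hM'.exists_sublist w ⟨0, by omega⟩
      refine ⟨Su, ?_, by simp [hu]; omega⟩
      rwa [hu, slotTuple_selected VG VGf hτ hτt]
    · obtain ⟨M', hM', hwM'⟩ := hclose _ (slotTuple_cases VG VGf hτ u)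
      obtain ⟨Su, hsub, hsum⟩ := hM'.exists_sublist w ⟨0, by omega⟩
      exact ⟨Su, hsub, by simp [hu]; omega⟩
  choose S hSsub hSw using hslot
  have hQ' : (k - 1) * (2 * n) ≤ Q := hQ ▸ mul_two_mul_le_length_selString c0 c2 pad VG VGf
  obtain ⟨M, hM, hwM⟩ := exists_isMatching_of_sublist w (S := alignedSeq c0 c2 pad k τ S)
    (fun i => hP i ▸ alignedSeq_sublist_selString c0 c2 pad VG VGf hτ hn (by omega) i.2 hQ' S
      fun u => hSsub u i) ⟨0, by omega⟩
  exact ⟨M, hM, hwM ▸ le_sum_map_alignedSeq c0 c2 pad hτ hk w hw0 hw2 hwpad S _ hSw⟩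
end
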